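/- Contiguous relation I: let q ∈ (0,1), n ≥ 1 an integer, and a, b real numbers with a q^j ≠ 1 for j = 1, …, n+1. Then the polynomial identity −p_n(x; a, q²b) = [a(1 − q^n)(1 − a b q^{n+3}) / (q^{n−2} (1 − aq)(1 − aq²))] · x · p_{n−1}(x; q²a, q²b) − p_n(x; qa, qb) holds for all x. -/

import Mathlib

/-!
Both `p_n(x; qa, qb)` and `p_n(x; a, q²b)` have the numerator parameter `ab q^{n+3}`, so their
`k`-th coefficients differ only through `1/(aq²;q)_k - 1/(aq;q)_k = -aq (1 - q^k) / (aq;q)_{k+1}`.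
The factor `1 - q^k` cancels the last factor of `(q;q)_k`, and peeling the first factor off every
remaining Pochhammer symbol turns the `k`-th coefficient of the difference into a multiple of the
`(k-1)`-th coefficient of `p_{n-1}(x; q²a, q²b)`.
-/

/-- The q-Pochhammer symbol `(a;q)_k = ∏_{j=0}^{k-1} (1 - a q^j)`. -/
noncomputable def qPoch (q a : ℝ) (k : ℕ) : ℝ :=
  ∏ j ∈ Finset.range k, (1 - a * q ^ j)

/-- The little q-Jacobi polynomial
`p_n(x; a, b) = ∑_{k=0}^{n} [(q^{−n};q)_k (a b q^{n+1};q)_k / ((a q;q)_k (q;q)_k)] (q x)^k`. -/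
noncomputable def littleQJacobi (q a b : ℝ) (n : ℕ) : Polynomial ℝ :=
  ∑ k ∈ Finset.range (n + 1),
    Polynomial.C (qPoch q (q ^ (-(n : ℤ))) k * qPoch q (a * b * q ^ (n + 1)) k /
      (qPoch q (a * q) k * qPoch q q k)) * (Polynomial.C q * Polynomial.X) ^ k

open Finset Polynomial

lemma qPoch_zero (q a : ℝ) : qPoch q a 0 = 1 :=
  prod_range_zero _

lemma qPoch_succ (q a : ℝ) (k : ℕ) : qPoch q a (k + 1) = qPoch q a k * (1 - a * q ^ k) :=
  prod_range_succ _ _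

lemma qPoch_succ' (q a : ℝ) (k : ℕ) : qPoch q a (k + 1) = (1 - a) * qPoch q (a * q) k := by
  simp only [qPoch, prod_range_succ', pow_zero, mul_one, pow_succ, mul_assoc, mul_comm,
    mul_left_comm]

lemma qPoch_ne_zero {q a : ℝ} {k : ℕ} (h : ∀ j < k, a * q ^ j ≠ 1) : qPoch q a k ≠ 0 :=
  prod_ne_zero_iff.mpr fun j hj => sub_ne_zero.mpr (h j (mem_range.mp hj)).symm

lemma inv_qPoch_mul_sub_inv_qPoch {q a : ℝ} {k : ℕ} (h : qPoch q a (k + 2) ≠ 0) :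
    (qPoch q (a * q) (k + 1))⁻¹ - (qPoch q a (k + 1))⁻¹ =
      -a * (1 - q ^ (k + 1)) / qPoch q a (k + 2) := by
  have hr := qPoch_succ q a (k + 1)
  have hl := qPoch_succ' q a (k + 1)
  have h₁ : qPoch q a (k + 1) ≠ 0 := left_ne_zero_of_mul (hr ▸ h)
  have h₂ : 1 - a ≠ 0 := left_ne_zero_of_mul (hl ▸ h)
  have h₃ : qPoch q (a * q) (k + 1) ≠ 0 := right_ne_zero_of_mul (hl ▸ h)
  rw [hl]
  field_simp
  linear_combination hr.symm.trans hl

noncomputable def littleQJacobiCoeff (q a b : ℝ) (n k : ℕ) : ℝ :=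
  qPoch q (q ^ (-(n : ℤ))) k * qPoch q (a * b * q ^ (n + 1)) k /
    (qPoch q (a * q) k * qPoch q q k)

lemma littleQJacobi_eval (q a b : ℝ) (n : ℕ) (x : ℝ) :
    (littleQJacobi q a b n).eval x =
      ∑ k ∈ range (n + 1), littleQJacobiCoeff q a b n k * (q * x) ^ k := by
  simp [littleQJacobi, littleQJacobiCoeff, eval_finsetSum]

lemma littleQJacobiCoeff_zero (q a b : ℝ) (n : ℕ) : littleQJacobiCoeff q a b n 0 = 1 := by
  simp [littleQJacobiCoeff, qPoch_zero]

lemma littleQJacobiCoeff_sub (q a b : ℝ) (n k : ℕ) :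
    littleQJacobiCoeff q (q * a) (q * b) n k - littleQJacobiCoeff q a (q ^ 2 * b) n k =
      qPoch q (q ^ (-(n : ℤ))) k * qPoch q (a * b * q ^ (n + 3)) k / qPoch q q k *
        ((qPoch q (a * q * q) k)⁻¹ - (qPoch q (a * q) k)⁻¹) := by
  rw [littleQJacobiCoeff, littleQJacobiCoeff,
    show q * a * (q * b) * q ^ (n + 1) = a * b * q ^ (n + 3) by ring,
    show a * (q ^ 2 * b) * q ^ (n + 1) = a * b * q ^ (n + 3) by ring,
    show q * a * q = a * q * q by ring]
  ring

lemma littleQJacobiCoeff_sub_succ {q a : ℝ} (b : ℝ) {m k : ℕ} (hq0 : 0 < q) (hq1 : q < 1)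
    (ha : qPoch q (a * q) (k + 2) ≠ 0) :
    littleQJacobiCoeff q (q * a) (q * b) (m + 1) (k + 1) -
        littleQJacobiCoeff q a (q ^ 2 * b) (m + 1) (k + 1) =
      a * q * (1 - q ^ (m + 1)) * (1 - a * b * q ^ (m + 4)) /
          (q ^ (m + 1) * (1 - a * q) * (1 - a * q ^ 2)) *
        littleQJacobiCoeff q (q ^ 2 * a) (q ^ 2 * b) m k := by
  have hq : q ≠ 0 := hq0.ne'
  have hqk : 1 - q ^ (k + 1) ≠ 0 := sub_ne_zero.mpr (pow_lt_one₀ hq0.le hq1 k.succ_ne_zero).ne'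
  rw [littleQJacobiCoeff_sub, inv_qPoch_mul_sub_inv_qPoch ha, littleQJacobiCoeff]
  have hshift : q ^ (-((m + 1 : ℕ) : ℤ)) * q = q ^ (-(m : ℤ)) := by
    rw [← zpow_add_one₀ hq]; push_cast; ring_nf
  rw [qPoch_succ' q (q ^ _), qPoch_succ' q (a * b * q ^ (m + 1 + 3)), qPoch_succ q q,
    qPoch_succ' q (a * q) (k + 1), qPoch_succ' q (a * q * q) k, ← pow_succ', hshift,
    zpow_neg q ((m + 1 : ℕ) : ℤ), zpow_natCast,
    show a * b * q ^ (m + 1 + 3) * q = q ^ 2 * a * (q ^ 2 * b) * q ^ (m + 1) by ring,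
    show a * q * q * q = q ^ 2 * a * q by ring]
  field_simp
  ring

theorem littleQJacobi_contiguous_I_general (q a b : ℝ) (n : ℕ)
    (hq0 : 0 < q) (hq1 : q < 1)
    (ha : ∀ j : ℕ, 1 ≤ j → j ≤ n + 1 → a * q ^ j ≠ 1) :
    ∀ x : ℝ,
      -(littleQJacobi q a (q ^ 2 * b) n).eval x =
        a * (1 - q ^ n) * (1 - a * b * q ^ (n + 3)) /
            (q ^ ((n : ℤ) - 2) * (1 - a * q) * (1 - a * q ^ 2)) * x *
          (littleQJacobi q (q ^ 2 * a) (q ^ 2 * b) (n - 1)).eval x -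
        (littleQJacobi q (q * a) (q * b) n).eval x := by
  intro x
  rcases n with _ | m
  · simp [littleQJacobi, qPoch_zero]
  have hpoch (k : ℕ) (hk : k < m + 1) : qPoch q (a * q) (k + 2) ≠ 0 :=
    qPoch_ne_zero fun j hj => by
      rw [mul_assoc, ← pow_succ']
      exact ha (j + 1) (by omega) (by omega)
  rw [eq_sub_iff_add_eq, neg_add_eq_sub, littleQJacobi_eval, littleQJacobi_eval,
    littleQJacobi_eval, Nat.add_sub_cancel, ← sum_sub_distrib, sum_range_succ',
    littleQJacobiCoeff_zero, littleQJacobiCoeff_zero, sub_self, add_zero, mul_sum]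
  refine sum_congr rfl fun k hk => ?_
  rw [← sub_mul, littleQJacobiCoeff_sub_succ b hq0 hq1 (hpoch k (mem_range.mp hk)),
    zpow_sub₀ hq0.ne', zpow_natCast, zpow_ofNat]
  field_simp
  ring

/-- contiguous relation I:
`−p_n(x; a, q²b) = [a(1 − q^n)(1 − a b q^{n+3}) / (q^{n−2}(1 − aq)(1 − aq²))] · x ·
p_{n−1}(x; q²a, q²b) − p_n(x; qa, qb)`. -/
theorem littleQJacobi_contiguous_I (q a b : ℝ) (n : ℕ) (hn : 1 ≤ n)
    (hq0 : 0 < q) (hq1 : q < 1)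
    (ha : ∀ j : ℕ, 1 ≤ j → j ≤ n + 1 → a * q ^ j ≠ 1) :
    ∀ x : ℝ,
      -(littleQJacobi q a (q ^ 2 * b) n).eval x =
        a * (1 - q ^ n) * (1 - a * b * q ^ (n + 3)) /
            (q ^ ((n : ℤ) - 2) * (1 - a * q) * (1 - a * q ^ 2)) * x *
          (littleQJacobi q (q ^ 2 * a) (q ^ 2 * b) (n - 1)).eval x -
        (littleQJacobi q (q * a) (q * b) n).eval x :=
  littleQJacobi_contiguous_I_general q a b n hq0 hq1 ha
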